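/- If player i can force play from v via U to T, and the opponent ¬i can force play from v via U to T', then there exist u ∈ T and u' ∈ T' such that u = u', or u ∈ U, or u' ∈ U. -/
import Mathlib


universe u

/-- A parity game: a directed graph with a total edge relation, a priority
function and an owner function (`true` = player even, `false` = player odd). -/
structure ParityGame (V : Type u) where
  edge : V → V → Prop
  total : ∀ v, ∃ w, edge v w
  prio : V → ℕ
  owner : V → Bool

namespace ParityGame

variable {V : Type u}

/-- A (history-dependent) strategy: given the history of previously visited
vertices and the current vertex, choose a successor.  Only the values at
vertices owned by the given player matter. -/
abbrev Strategy (V : Type u) : Type u := List V → V → V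

variable (G : ParityGame V)

/-- A strategy is valid for player `i` if it always proposes edges. -/
def ValidStrategy (i : Bool) (σ : Strategy V) : Prop :=
  ∀ h v, G.owner v = i → G.edge v (σ h v)

/-- A memoryless strategy only depends on the current vertex. -/
def Memoryless (σ : Strategy V) : Prop := ∀ h h' v, σ h v = σ h' v

/-- An (infinite) play is an infinite path in the game graph. -/
def IsPlay (p : ℕ → V) : Prop := ∀ n, G.edge (p n) (p (n + 1))

/-- The history of a play before position `n`. -/
def hist (p : ℕ → V) (n : ℕ) : List V := List.ofFn (fun k : Fin n => p k)

/-- A play is consistent with a strategy `σ` of player `i` if at every vertex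
owned by `i` the play follows `σ`. -/
def Consistent (i : Bool) (σ : Strategy V) (p : ℕ → V) : Prop :=
  ∀ n, G.owner (p n) = i → p (n + 1) = σ (hist p n) (p n)

/-- `G.ForcesVia i σ v U T`: every play from `v` consistent with `σ` reaches
`T`, all earlier vertices lying in `U`. -/
def ForcesVia (i : Bool) (σ : Strategy V) (v : V) (U T : Set V) : Prop :=
  ∀ p : ℕ → V, G.IsPlay p → G.Consistent i σ p → p 0 = v →
    ∃ n, p n ∈ T ∧ ∀ j < n, p j ∈ U

/-- `v ⇒_{i,U} T`: player `i` has a memoryless strategy forcing every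
consistent play from `v` to reach `T` while staying in `U` beforehand. -/
def Forces (i : Bool) (v : V) (U T : Set V) : Prop :=
  ∃ σ : Strategy V, G.ValidStrategy i σ ∧ Memoryless σ ∧ G.ForcesVia i σ v U T

/-- Every play from `v` consistent with `σ` stays in `U` forever. -/
def DivergesVia (i : Bool) (σ : Strategy V) (v : V) (U : Set V) : Prop :=
  ∀ p : ℕ → V, G.IsPlay p → G.Consistent i σ p → p 0 = v → ∀ n, p n ∈ U

/-- `v ⇒^ω_{i,U}`: player `i` has a memoryless strategy keeping all
consistent plays from `v` forever inside `U`. -/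
def Diverges (i : Bool) (v : V) (U : Set V) : Prop :=
  ∃ σ : Strategy V, G.ValidStrategy i σ ∧ Memoryless σ ∧ G.DivergesVia i σ v U

/-- Priority `k` occurs infinitely often on the play `p`. -/
def InfOften (p : ℕ → V) (k : ℕ) : Prop := ∀ N, ∃ n, N ≤ n ∧ G.prio (p n) = k

/-- Player even wins a play iff the least priority occurring infinitely often
is even. -/
def EvenWinsPlay (p : ℕ → V) : Prop := Even (sInf {k | G.InfOften p k})

/-- Player `i` wins the play `p`. -/
def WinsPlay (i : Bool) (p : ℕ → V) : Prop := G.EvenWinsPlay p ↔ i = true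

/-- `σ` is a winning strategy for player `i` from `v`. -/
def WinningFrom (i : Bool) (σ : Strategy V) (v : V) : Prop :=
  ∀ p : ℕ → V, G.IsPlay p → G.Consistent i σ p → p 0 = v → G.WinsPlay i p

end ParityGame

/-- If both players can force play from `v` via `U` into their respective
target sets, then the targets overlap or meet `U`. -/
theorem forces_both_players_overlap {V : Type u} [Fintype V]
    (G : ParityGame V) (v : V) (i : Bool) (U T T' : Set V)
    (h : G.Forces i v U T) (h' : G.Forces (!i) v U T') :
    ∃ u ∈ T, ∃ u' ∈ T', u = u' ∨ u ∈ U ∨ u' ∈ U := by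
  obtain ⟨σ, hσv, hσm, hσf⟩ := h
  obtain ⟨σ', hσ'v, hσ'm, hσ'f⟩ := h'
  -- build the play following σ at player i's vertices, σ' otherwise
  let p : ℕ → V := fun n => Nat.rec v
    (fun _ w => if G.owner w = i then σ [] w else σ' [] w) n
  have hstep : ∀ n, p (n + 1) =
      if G.owner (p n) = i then σ [] (p n) else σ' [] (p n) := fun n => rfl
  have hplay : G.IsPlay p := by
    intro n
    rw [hstep]
    by_cases hb : G.owner (p n) = i
    · simp only [hb, if_true]; exact hσv [] (p n) hb
    · simp only [hb, if_false]
      exact hσ'v [] (p n) (by cases hi : G.owner (p n) <;> cases i <;> simp_all)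
  have hc : G.Consistent i σ p := by
    intro n hn; rw [hstep, if_pos hn, hσm]
  have hc' : G.Consistent (!i) σ' p := by
    intro n hn
    have : G.owner (p n) ≠ i := by cases i <;> simp_all
    rw [hstep, if_neg this, hσ'm]
  obtain ⟨n, hnT, hnU⟩ := hσf p hplay hc rfl
  obtain ⟨m, hmT, hmU⟩ := hσ'f p hplay hc' rfl
  rcases lt_trichotomy n m with hlt | heq | hgt
  · exact ⟨p n, hnT, p m, hmT, Or.inr (Or.inl (hmU n hlt))⟩
  · exact ⟨p n, hnT, p m, hmT, Or.inl (by rw [heq])⟩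
  · exact ⟨p n, hnT, p m, hmT, Or.inr (Or.inr (hnU m hgt))⟩
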